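/- Let N ≥ n_x be positive integers, A ∈ ℝ^{n_x×n_x}, B ∈ ℝ^{n_x×n_u}, let ξ ∈ ℝ^{n_u} be a unit vector, 0 < γ < 1, 0 < ρ_min ≤ ρ_max, and let M ∈ ℝ^{n_u×(n_u−1)} be a matrix whose columns form a basis of {v ∈ ℝ^{n_u} : ⟪ξ, v⟫ = 0}. Assume that for every choice of n_x distinct indices P₁, …, P_{n_x} ∈ {1, …, N}, the block matrix [A^{N−P₁}BM, …, A^{N−P_{n_x}}BM] has rank n_x. Let η ∈ ℝ^{n_x} be nonzero, and let σ₁, …, σ_N ∈ [ρ_min, ρ_max] and u₁, …, u_N ∈ ℝ^{n_u} satisfy, for every i ∈ {1, …, N}: uᵢ ∈ V(σᵢ) and −Bᵀ(Aᵀ)^{N−i}η ∈ N_{V(σᵢ)}(uᵢ). Then the number of indices i ∈ {1, …, N} at which the nonconvex constraints fail, i.e. at which it is NOT the case that (ρ_min ≤ ‖uᵢ‖ ≤ ρ_max and ⟪ξ, uᵢ⟫ ≥ γ‖uᵢ‖), is at most n_x − 1. -/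

import Mathlib

open RealInnerProductSpace Matrix

open scoped Classical

/-- Identification of a plain vector in `Fin n → ℝ` with a point of Euclidean space. -/
noncomputable def toE {n : ℕ} (v : Fin n → ℝ) : EuclideanSpace ℝ (Fin n) :=
  (EuclideanSpace.equiv (Fin n) ℝ).symm v

/-- The spherical cap `V(σ) = {u : ‖u‖ ≤ σ ∧ ⟪ξ, u⟫ ≥ γσ}`. -/
def cap {nu : ℕ} (ξ : EuclideanSpace ℝ (Fin nu)) (γ σ : ℝ) :
    Set (EuclideanSpace ℝ (Fin nu)) :=
  {w : EuclideanSpace ℝ (Fin nu) | ‖w‖ ≤ σ ∧ γ * σ ≤ ⟪ξ, w⟫}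

/-!
At a failing index `i` the control `uᵢ` lies strictly inside the ball of radius `σᵢ`, so the cap
contains a segment through `uᵢ` in every direction orthogonal to `ξ`; a normal vector of the cap at
`uᵢ` must then be orthogonal to all of these directions, i.e. `ηᵀ A^{N-i} B M = 0`. If there were
`n_x` failing indices, `η` would annihilate the concatenated matrix `[A^{N-P₁}BM, …]`, whose rank
`n_x` makes its rows linearly independent, forcing `η = 0`.
-/

theorem Matrix.eq_zero_of_vecMul_eq_zero_of_rank_eq_card {K m n : Type*} [Field K] [Fintype m]
    [Fintype n] {C : Matrix m n K} (hC : C.rank = Fintype.card m) {v : m → K} (hv : v ᵥ* C = 0) :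
    v = 0 := by
  have hrows : LinearIndependent K C.row := by
    rw [linearIndependent_iff_card_eq_finrank_span, Set.finrank, ← rank_eq_finrank_span_row, hC]
  funext i
  exact Fintype.linearIndependent_iff.mp hrows v (by rw [← hv, vecMul_eq_sum]; rfl) i

theorem inner_eq_zero_of_forall_inner_sub_nonpos {E : Type*} [NormedAddCommGroup E]
    [InnerProductSpace ℝ E] {S : Set E} {u g m : E} {ε : ℝ} (hε : 0 < ε)
    (hplus : u + ε • m ∈ S) (hminus : u + (-ε) • m ∈ S) (hg : ∀ y ∈ S, ⟪g, y - u⟫ ≤ 0) :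
    ⟪g, m⟫ = 0 := by
  have h₁ := hg _ hplus
  have h₂ := hg _ hminus
  rw [add_sub_cancel_left, real_inner_smul_right] at h₁ h₂
  nlinarith

section Cap

variable {nu : ℕ} {ξ u m : EuclideanSpace ℝ (Fin nu)} {γ σ : ℝ}

theorem add_smul_mem_cap (hu : u ∈ cap ξ γ σ) (hξm : ⟪ξ, m⟫ = 0) {t : ℝ}
    (ht : ‖u‖ + |t| * ‖m‖ ≤ σ) : u + t • m ∈ cap ξ γ σ := by
  refine ⟨?_, ?_⟩
  · calc ‖u + t • m‖ ≤ ‖u‖ + ‖t • m‖ := norm_add_le _ _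
      _ = ‖u‖ + |t| * ‖m‖ := by rw [norm_smul, Real.norm_eq_abs]
      _ ≤ σ := ht
  · rw [inner_add_right, real_inner_smul_right, hξm, mul_zero, add_zero]
    exact hu.2

theorem inner_eq_zero_of_forall_inner_sub_nonpos_cap (hu : u ∈ cap ξ γ σ) (hlt : ‖u‖ < σ)
    (hξm : ⟪ξ, m⟫ = 0) {g : EuclideanSpace ℝ (Fin nu)}
    (hg : ∀ y ∈ cap ξ γ σ, ⟪g, y - u⟫ ≤ 0) : ⟪g, m⟫ = 0 := by
  set ε := (σ - ‖u‖) / (‖m‖ + 1)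
  have hε : 0 < ε := div_pos (by linarith) (by positivity)
  have hεm : ‖u‖ + ε * ‖m‖ ≤ σ := by
    have : ε * ‖m‖ ≤ σ - ‖u‖ := calc
      ε * ‖m‖ ≤ ε * (‖m‖ + 1) := by gcongr; linarith
      _ = σ - ‖u‖ := div_mul_cancel₀ _ (by positivity)
    linarith
  refine inner_eq_zero_of_forall_inner_sub_nonpos hε ?_ ?_ hg <;>
    refine add_smul_mem_cap hu hξm ?_
  · rwa [abs_of_pos hε]
  · rwa [abs_neg, abs_of_pos hε]

theorem norm_lt_of_mem_cap_of_not_constraints (hγ : 0 ≤ γ) (hu : u ∈ cap ξ γ σ)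
    {ρmin ρmax : ℝ} (hσ : σ ∈ Set.Icc ρmin ρmax)
    (hfail : ¬(ρmin ≤ ‖u‖ ∧ ‖u‖ ≤ ρmax ∧ γ * ‖u‖ ≤ ⟪ξ, u⟫)) : ‖u‖ < σ := by
  obtain ⟨hnorm, hinner⟩ := hu
  by_contra! h
  exact hfail ⟨hσ.1.trans h, hnorm.trans hσ.2,
    (mul_le_mul_of_nonneg_left hnorm hγ).trans hinner⟩

end Cap

theorem inner_toE_transpose_mulVec {m nu l : ℕ} (G : Matrix (Fin m) (Fin nu) ℝ)
    (M : Matrix (Fin nu) (Fin l) ℝ) (v : Fin m → ℝ) (j : Fin l) :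
    ⟪toE (Gᵀ *ᵥ v), toE (Mᵀ j)⟫ = (v ᵥ* (G * M)) j := by
  rw [← vecMul_vecMul, EuclideanSpace.inner_eq_star_dotProduct, mulVec_transpose]
  simp [toE, vecMul, dotProduct, mul_comm]

theorem stmt_12_general (nx nu N : ℕ)
    (A : Matrix (Fin nx) (Fin nx) ℝ) (B : Matrix (Fin nx) (Fin nu) ℝ)
    (ξ : EuclideanSpace ℝ (Fin nu))
    (γ ρmin ρmax : ℝ) (hγ0 : 0 < γ)
    (M : Matrix (Fin nu) (Fin (nu - 1)) ℝ)
    (hspan : (Submodule.span ℝ (Set.range fun j : Fin (nu - 1) => toE (Mᵀ j)) : Set _) =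
      {v : EuclideanSpace ℝ (Fin nu) | ⟪ξ, v⟫ = 0})
    (hrank : ∀ P : Fin nx → ℕ, (∀ j, P j ∈ Finset.Icc 1 N) → Function.Injective P →
      (Matrix.of fun r (p : Fin nx × Fin (nu - 1)) =>
        (A ^ (N - P p.1) * B * M) r p.2).rank = nx)
    (η : Fin nx → ℝ) (hη : η ≠ 0)
    (σ : ℕ → ℝ) (u : ℕ → EuclideanSpace ℝ (Fin nu))
    (hσ : ∀ i ∈ Finset.Icc 1 N, σ i ∈ Set.Icc ρmin ρmax)
    (hu : ∀ i ∈ Finset.Icc 1 N, u i ∈ cap ξ γ (σ i))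
    (hnc : ∀ i ∈ Finset.Icc 1 N, ∀ y ∈ cap ξ γ (σ i),
      ⟪-toE ((Bᵀ * (Aᵀ) ^ (N - i)) *ᵥ η), y - u i⟫ ≤ 0) :
    ((Finset.Icc 1 N).filter fun i =>
      ¬(ρmin ≤ ‖u i‖ ∧ ‖u i‖ ≤ ρmax ∧ γ * ‖u i‖ ≤ ⟪ξ, u i⟫)).card ≤ nx - 1 := by
  set F := (Finset.Icc 1 N).filter fun i =>
      ¬(ρmin ≤ ‖u i‖ ∧ ‖u i‖ ≤ ρmax ∧ γ * ‖u i‖ ≤ ⟪ξ, u i⟫)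
  have hfailing : ∀ i ∈ F, η ᵥ* (A ^ (N - i) * B * M) = 0 := by
    intro i hi
    obtain ⟨hiN, hfail⟩ := Finset.mem_filter.mp hi
    funext j
    have hξM : ⟪ξ, toE (Mᵀ j)⟫ = 0 := hspan.subset (Submodule.subset_span ⟨j, rfl⟩)
    have hlt := norm_lt_of_mem_cap_of_not_constraints hγ0.le (hu i hiN) (hσ i hiN) hfail
    have h := inner_eq_zero_of_forall_inner_sub_nonpos_cap (hu i hiN) hlt hξM (hnc i hiN)
    rwa [inner_neg_left, neg_eq_zero, ← transpose_pow, ← transpose_mul,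
      inner_toE_transpose_mulVec] at h
  by_contra! hcard
  have hnx : nx ≤ F.card := by omega
  let P : Fin nx → ℕ := fun k => F.orderEmbOfFin rfl (Fin.castLE hnx k)
  have hPF : ∀ k, P k ∈ F := fun k => F.orderEmbOfFin_mem rfl _
  have hPinj : Function.Injective P :=
    (F.orderEmbOfFin rfl).injective.comp (Fin.castLE_injective hnx)
  have hrankP := hrank P (fun k => (Finset.mem_filter.mp (hPF k)).1) hPinj
  refine hη (eq_zero_of_vecMul_eq_zero_of_rank_eq_card
    (hrankP.trans (Fintype.card_fin nx).symm) ?_)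
  funext ⟨k, j⟩
  exact congrFun (hfailing (P k) (hPF k)) j

/-- under the strengthened controllability condition, the number of time grid
points `i ∈ {1, …, N}` at which the nonconvex constraints
`ρmin ≤ ‖uᵢ‖ ≤ ρmax ∧ ⟪ξ, uᵢ⟫ ≥ γ‖uᵢ‖` fail is at most `n_x − 1`, provided
`uᵢ ∈ V(σᵢ)` and `−Bᵀ(Aᵀ)^{N−i}η ∈ N_{V(σᵢ)}(uᵢ)` for each `i`. -/
theorem stmt_12 (nx nu N : ℕ) (hnx : 0 < nx) (hN : nx ≤ N)
    (A : Matrix (Fin nx) (Fin nx) ℝ) (B : Matrix (Fin nx) (Fin nu) ℝ)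
    (ξ : EuclideanSpace ℝ (Fin nu)) (hξ : ‖ξ‖ = 1)
    (γ ρmin ρmax : ℝ) (hγ0 : 0 < γ) (hγ1 : γ < 1) (hρ0 : 0 < ρmin) (hρ : ρmin ≤ ρmax)
    (M : Matrix (Fin nu) (Fin (nu - 1)) ℝ)
    (hindep : LinearIndependent ℝ (fun j : Fin (nu - 1) => toE (Mᵀ j)))
    (hspan : (Submodule.span ℝ (Set.range fun j : Fin (nu - 1) => toE (Mᵀ j)) : Set _) =
      {v : EuclideanSpace ℝ (Fin nu) | ⟪ξ, v⟫ = 0})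
    (hrank : ∀ P : Fin nx → ℕ, (∀ j, P j ∈ Finset.Icc 1 N) → Function.Injective P →
      (Matrix.of fun r (p : Fin nx × Fin (nu - 1)) =>
        (A ^ (N - P p.1) * B * M) r p.2).rank = nx)
    (η : Fin nx → ℝ) (hη : η ≠ 0)
    (σ : ℕ → ℝ) (u : ℕ → EuclideanSpace ℝ (Fin nu))
    (hσ : ∀ i ∈ Finset.Icc 1 N, σ i ∈ Set.Icc ρmin ρmax)
    (hu : ∀ i ∈ Finset.Icc 1 N, u i ∈ cap ξ γ (σ i))
    (hnc : ∀ i ∈ Finset.Icc 1 N, ∀ y ∈ cap ξ γ (σ i),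
      ⟪-toE ((Bᵀ * (Aᵀ) ^ (N - i)) *ᵥ η), y - u i⟫ ≤ 0) :
    ((Finset.Icc 1 N).filter fun i =>
      ¬(ρmin ≤ ‖u i‖ ∧ ‖u i‖ ≤ ρmax ∧ γ * ‖u i‖ ≤ ⟪ξ, u i⟫)).card ≤ nx - 1 :=
  stmt_12_general nx nu N A B ξ γ ρmin ρmax hγ0 M hspan hrank η hη σ u hσ hu hnc
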